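/- Assume: (i) all corner concentration values of all cells are strictly positive; (ii) α > max{u₁⁺, u₂⁺, 0} over all Gauss points of all interior edges and Δt/Δx + Δt/Δy ≤ (1/6)·min{Φ_m/α, B₁, B₂}, where Φ_m is the minimum of Φ over all mesh corners, B₁ = min over interior vertical-edge Gauss points and both signs of Φ_{i+1/2,j±1/2}/(α − u₁⁺_{i+1/2,j,β}), B₂ the analogous horizontal-edge minimum; (iii) all D₁₁ values lie in [0, D₁₁^M], all D₂₂ values in [0, D₂₂^M], all |D₁₂| values are ≤ D₁₂^M, all |D₂₁| values ≤ D₂₁^M, α̃ ≥ (Δy/(2Δx))·D₁₁^M + √3·D₁₂^M, α̃ ≥ (Δx/(2Δy))·D₂₂^M + √3·D₂₁^M, D₁₁^M·Λ₁ + 2(α̃ + D₁₂^M)·λ < Φ_m/12, and D₂₂^M·Λ₂ + 2(α̃ + D₂₁^M)·λ < Φ_m/12; (iv) z₁ ≥ 0 and for every cell and every (β,γ): 6Δt·z₁·max{P^{βγ}, 0} ≤ 1, if q^{βγ} ≥ 0 then c̃^{βγ} ≥ 0, and if q^{βγ} < 0 then c̃^{βγ} = c(x_i^β, y_j^γ)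 and 6Δt(−q^{βγ}) < Φ^m_{ij}, the minimum of Φ over the four corners of K_{ij}. Then the Euler-forward cell-average update r̄^{new}_{ij} = H^c_{ij} + H^d_{x,ij} + H^d_{y,ij} + H^s_{ij} is strictly positive for every interior cell (2 ≤ i ≤ N_x−1, 2 ≤ j ≤ N_y−1). -/

import Mathlib

/-!
Each of the four parts of `r̄^new` is positive by itself. In each of them `r̄` contributes the
corner values of `c` in `K_{ij}` weighted by `Φ`, and the CFL-type conditions keep the losses
charged to each corner below its weight.

* Convection: with the upwind flux and `α > u`, the traces of the neighbouring cells enter with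
  positive coefficients, and the outflow through an edge is a Gauss combination of two corner
  values whose coefficient is at most `Φ / (6(Δt/Δx + Δt/Δy))` at both of them.
* Diffusion: the penalty `α̃` dominates `D₁₁/(2Δx) + √3 D₁₂/Δy`, so the neighbouring traces again
  enter with nonnegative coefficients, and the own tangential terms are controlled by
  `|b₁ - b₀| ≤ b₀ + b₁`. Reflecting an edge turns the lower bound for the flux through it into an
  upper bound, and `H^d_y` is `H^d_x` of the transposed mesh.
* Source: at every interior Gauss point `r ≥ Φ_m c`, which absorbs the reaction term and a sink.
-/

noncomputable section

namespace DG2D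

/-- Gauss constant `μ₁ = (3+√3)/6`. -/
def mu1 : ℝ := (3 + Real.sqrt 3) / 6

/-- Gauss constant `μ₂ = (3-√3)/6`. -/
def mu2 : ℝ := (3 - Real.sqrt 3) / 6

/-- Value at the Gauss point `β` of an edge, from the two endpoint (corner) values:
`β = 1` gives `μ₁·a + μ₂·b`, `β = 2` gives `μ₂·a + μ₁·b`. -/
def ga (β : Fin 2) (a b : ℝ) : ℝ := if β = 0 then mu1 * a + mu2 * b else mu2 * a + mu1 * b

/-- Cell average `r̄_{ij} = (1/4)·∑ cΦ` over the four corners of `K_{ij}`.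
`Φ i j` denotes the corner value `Φ_{i+1/2,j+1/2}`; `c00 i j`, `c10 i j`, `c01 i j`,
`c11 i j` denote the corner values of `c` in cell `K_{ij}` at the corners
`(i-1/2,j-1/2)`, `(i+1/2,j-1/2)`, `(i-1/2,j+1/2)`, `(i+1/2,j+1/2)` respectively. -/
def rbar (Φ c00 c10 c01 c11 : ℕ → ℕ → ℝ) (i j : ℕ) : ℝ :=
  (c00 i j * Φ (i - 1) (j - 1) + c10 i j * Φ i (j - 1)
    + c01 i j * Φ (i - 1) j + c11 i j * Φ i j) / 4

/-- Trace `c⁻` (from `K_{ij}`) at Gauss point `β` of the vertical edge `x_{i+1/2}`, row `j`. -/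
def cmV (c10 c11 : ℕ → ℕ → ℝ) (i j : ℕ) (β : Fin 2) : ℝ := ga β (c10 i j) (c11 i j)

/-- Trace `c⁺` (from `K_{i+1,j}`) at Gauss point `β` of the vertical edge `x_{i+1/2}`, row `j`. -/
def cpV (c00 c01 : ℕ → ℕ → ℝ) (i j : ℕ) (β : Fin 2) : ℝ := ga β (c00 (i + 1) j) (c01 (i + 1) j)

/-- Trace `c⁻` (from `K_{ij}`) at Gauss point `β` of the horizontal edge `y_{j+1/2}`, column `i`. -/
def cmH (c01 c11 : ℕ → ℕ → ℝ) (i j : ℕ) (β : Fin 2) : ℝ := ga β (c01 i j) (c11 i j)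

/-- Trace `c⁺` (from `K_{i,j+1}`) at Gauss point `β` of the horizontal edge `y_{j+1/2}`. -/
def cpH (c00 c10 : ℕ → ℕ → ℝ) (i j : ℕ) (β : Fin 2) : ℝ := ga β (c00 i (j + 1)) (c10 i (j + 1))

/-- Jump `[c] = c⁺ - c⁻` at a vertical-edge Gauss point. -/
def jumpV (c00 c10 c01 c11 : ℕ → ℕ → ℝ) (i j : ℕ) (β : Fin 2) : ℝ :=
  cpV c00 c01 i j β - cmV c10 c11 i j β

/-- Jump `[c] = c⁺ - c⁻` at a horizontal-edge Gauss point. -/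
def jumpH (c00 c10 c01 c11 : ℕ → ℕ → ℝ) (i j : ℕ) (β : Fin 2) : ℝ :=
  cpH c00 c10 i j β - cmH c01 c11 i j β

/-- Convective flux `û₁c = u₁⁺·c⁺ - α·[c]` at vertical-edge Gauss points. -/
def uc1 (u1 : ℕ → ℕ → Fin 2 → ℝ) (c00 c10 c01 c11 : ℕ → ℕ → ℝ) (α : ℝ)
    (i j : ℕ) (β : Fin 2) : ℝ :=
  u1 i j β * cpV c00 c01 i j β - α * (cpV c00 c01 i j β - cmV c10 c11 i j β)

/-- Convective flux `û₂c = u₂⁺·c⁺ - α·[c]` at horizontal-edge Gauss points. -/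
def uc2 (u2 : ℕ → ℕ → Fin 2 → ℝ) (c00 c10 c01 c11 : ℕ → ℕ → ℝ) (α : ℝ)
    (i j : ℕ) (β : Fin 2) : ℝ :=
  u2 i j β * cpH c00 c10 i j β - α * (cpH c00 c10 i j β - cmH c01 c11 i j β)

/-- Convection part `H^c_{ij}`. -/
def Hc (u1 u2 : ℕ → ℕ → Fin 2 → ℝ) (Φ c00 c10 c01 c11 : ℕ → ℕ → ℝ) (α Δx Δy Δt : ℝ)
    (i j : ℕ) : ℝ :=
  rbar Φ c00 c10 c01 c11 i j / 3
    + (Δt / Δx) * ∑ β : Fin 2, (1 / 2 : ℝ) *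
        (uc1 u1 c00 c10 c01 c11 α (i - 1) j β - uc1 u1 c00 c10 c01 c11 α i j β)
    + (Δt / Δy) * ∑ β : Fin 2, (1 / 2 : ℝ) *
        (uc2 u2 c00 c10 c01 c11 α i (j - 1) β - uc2 u2 c00 c10 c01 c11 α i j β)

/-- Derivative trace `(c_x)⁻` at a vertical-edge Gauss point:
`(c_x)⁻_{i+1/2,β} = (c⁻_{i+1/2,β} - c⁺_{i-1/2,β})/Δx`. -/
def cxmV (c00 c10 c01 c11 : ℕ → ℕ → ℝ) (Δx : ℝ) (i j : ℕ) (β : Fin 2) : ℝ :=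
  (cmV c10 c11 i j β - cpV c00 c01 (i - 1) j β) / Δx

/-- Derivative trace `(c_x)⁺` at a vertical-edge Gauss point:
`(c_x)⁺_{i+1/2,β} = (c⁻_{i+3/2,β} - c⁺_{i+1/2,β})/Δx`. -/
def cxpV (c00 c10 c01 c11 : ℕ → ℕ → ℝ) (Δx : ℝ) (i j : ℕ) (β : Fin 2) : ℝ :=
  (cmV c10 c11 (i + 1) j β - cpV c00 c01 i j β) / Δx

/-- Tangential derivative trace `(c_y)⁻` on a vertical edge:
`(√3/Δy)·(c⁻_{i+1/2,2} - c⁻_{i+1/2,1})` (the same for both Gauss points). -/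
def cymV (c10 c11 : ℕ → ℕ → ℝ) (Δy : ℝ) (i j : ℕ) : ℝ :=
  (Real.sqrt 3 / Δy) * (cmV c10 c11 i j 1 - cmV c10 c11 i j 0)

/-- Tangential derivative trace `(c_y)⁺` on a vertical edge. -/
def cypV (c00 c01 : ℕ → ℕ → ℝ) (Δy : ℝ) (i j : ℕ) : ℝ :=
  (Real.sqrt 3 / Δy) * (cpV c00 c01 i j 1 - cpV c00 c01 i j 0)

/-- Average `{D₁₁c_x + D₁₂c_y}` at a vertical-edge Gauss point. -/
def GxV (D11m D11p D12m D12p : ℕ → ℕ → Fin 2 → ℝ) (c00 c10 c01 c11 : ℕ → ℕ → ℝ)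
    (Δx Δy : ℝ) (i j : ℕ) (β : Fin 2) : ℝ :=
  (D11m i j β * cxmV c00 c10 c01 c11 Δx i j β + D12m i j β * cymV c10 c11 Δy i j
    + D11p i j β * cxpV c00 c10 c01 c11 Δx i j β + D12p i j β * cypV c00 c01 Δy i j) / 2

/-- x-diffusion part `H^d_x`. -/
def Hdx (D11m D11p D12m D12p : ℕ → ℕ → Fin 2 → ℝ) (Φ c00 c10 c01 c11 : ℕ → ℕ → ℝ)
    (αt Δx Δy Δt : ℝ) (i j : ℕ) : ℝ :=
  rbar Φ c00 c10 c01 c11 i j / 6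
    - (Δt / Δx) * ∑ β : Fin 2, (1 / 2 : ℝ) *
        ((GxV D11m D11p D12m D12p c00 c10 c01 c11 Δx Δy (i - 1) j β
            + (αt / Δy) * jumpV c00 c10 c01 c11 (i - 1) j β)
          - (GxV D11m D11p D12m D12p c00 c10 c01 c11 Δx Δy i j β
            + (αt / Δy) * jumpV c00 c10 c01 c11 i j β))

/-- Derivative trace `(c_y)⁻` at a horizontal-edge Gauss point. -/
def cymH (c00 c10 c01 c11 : ℕ → ℕ → ℝ) (Δy : ℝ) (i j : ℕ) (β : Fin 2) : ℝ :=
  (cmH c01 c11 i j β - cpH c00 c10 i (j - 1) β) / Δy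

/-- Derivative trace `(c_y)⁺` at a horizontal-edge Gauss point. -/
def cypH (c00 c10 c01 c11 : ℕ → ℕ → ℝ) (Δy : ℝ) (i j : ℕ) (β : Fin 2) : ℝ :=
  (cmH c01 c11 i (j + 1) β - cpH c00 c10 i j β) / Δy

/-- Tangential derivative trace `(c_x)⁻` on a horizontal edge. -/
def cxmH (c01 c11 : ℕ → ℕ → ℝ) (Δx : ℝ) (i j : ℕ) : ℝ :=
  (Real.sqrt 3 / Δx) * (cmH c01 c11 i j 1 - cmH c01 c11 i j 0)

/-- Tangential derivative trace `(c_x)⁺` on a horizontal edge. -/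
def cxpH (c00 c10 : ℕ → ℕ → ℝ) (Δx : ℝ) (i j : ℕ) : ℝ :=
  (Real.sqrt 3 / Δx) * (cpH c00 c10 i j 1 - cpH c00 c10 i j 0)

/-- Average `{D₂₁c_x + D₂₂c_y}` at a horizontal-edge Gauss point. -/
def GyH (D21m D21p D22m D22p : ℕ → ℕ → Fin 2 → ℝ) (c00 c10 c01 c11 : ℕ → ℕ → ℝ)
    (Δx Δy : ℝ) (i j : ℕ) (β : Fin 2) : ℝ :=
  (D21m i j β * cxmH c01 c11 Δx i j + D22m i j β * cymH c00 c10 c01 c11 Δy i j β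
    + D21p i j β * cxpH c00 c10 Δx i j + D22p i j β * cypH c00 c10 c01 c11 Δy i j β) / 2

/-- y-diffusion part `H^d_y`. -/
def Hdy (D21m D21p D22m D22p : ℕ → ℕ → Fin 2 → ℝ) (Φ c00 c10 c01 c11 : ℕ → ℕ → ℝ)
    (αt Δx Δy Δt : ℝ) (i j : ℕ) : ℝ :=
  rbar Φ c00 c10 c01 c11 i j / 6
    - (Δt / Δy) * ∑ β : Fin 2, (1 / 2 : ℝ) *
        ((GyH D21m D21p D22m D22p c00 c10 c01 c11 Δx Δy i (j - 1) β
            + (αt / Δx) * jumpH c00 c10 c01 c11 i (j - 1) β)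
          - (GyH D21m D21p D22m D22p c00 c10 c01 c11 Δx Δy i j β
            + (αt / Δx) * jumpH c00 c10 c01 c11 i j β))

/-- Value of the bilinear function `c` at the interior Gauss point `(β,γ)` of cell `K_{ij}`. -/
def cGP (c00 c10 c01 c11 : ℕ → ℕ → ℝ) (i j : ℕ) (β γ : Fin 2) : ℝ :=
  ga β (ga γ (c00 i j) (c01 i j)) (ga γ (c10 i j) (c11 i j))

/-- Value of the bilinear function `r = cΦ` at the interior Gauss point `(β,γ)` of `K_{ij}`. -/
def rGP (Φ c00 c10 c01 c11 : ℕ → ℕ → ℝ) (i j : ℕ) (β γ : Fin 2) : ℝ :=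
  ga β (ga γ (c00 i j * Φ (i - 1) (j - 1)) (c01 i j * Φ (i - 1) j))
    (ga γ (c10 i j * Φ i (j - 1)) (c11 i j * Φ i j))

/-- Value of the bilinear interpolant of `Φ` at the interior Gauss point `(β,γ)` of `K_{ij}`. -/
def phiGP (Φ : ℕ → ℕ → ℝ) (i j : ℕ) (β γ : Fin 2) : ℝ :=
  ga β (ga γ (Φ (i - 1) (j - 1)) (Φ (i - 1) j)) (ga γ (Φ i (j - 1)) (Φ i j))

/-- Source part `H^s_{ij}`. -/
def Hs (Φ c00 c10 c01 c11 : ℕ → ℕ → ℝ) (q ct P : ℕ → ℕ → Fin 2 → Fin 2 → ℝ)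
    (z1 Δt : ℝ) (i j : ℕ) : ℝ :=
  rbar Φ c00 c10 c01 c11 i j / 3
    + Δt * ∑ β : Fin 2, ∑ γ : Fin 2, (1 / 2 : ℝ) * (1 / 2 : ℝ) *
        (ct i j β γ * q i j β γ - z1 * rGP Φ c00 c10 c01 c11 i j β γ * P i j β γ)

/-- The Euler-forward cell-average update `r̄^{new}_{ij} = H^c + H^d_x + H^d_y + H^s`. -/
def rbarnew (u1 u2 D11m D11p D12m D12p D21m D21p D22m D22p : ℕ → ℕ → Fin 2 → ℝ)
    (Φ c00 c10 c01 c11 : ℕ → ℕ → ℝ) (q ct P : ℕ → ℕ → Fin 2 → Fin 2 → ℝ)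
    (α αt z1 Δx Δy Δt : ℝ) (i j : ℕ) : ℝ :=
  Hc u1 u2 Φ c00 c10 c01 c11 α Δx Δy Δt i j
    + Hdx D11m D11p D12m D12p Φ c00 c10 c01 c11 αt Δx Δy Δt i j
    + Hdy D21m D21p D22m D22p Φ c00 c10 c01 c11 αt Δx Δy Δt i j
    + Hs Φ c00 c10 c01 c11 q ct P z1 Δt i j

open Finset

theorem sqrt_three_lt_two : Real.sqrt 3 < 2 := by
  rw [Real.sqrt_lt' two_pos]; norm_num

section GaussRule

theorem mu1_pos : 0 < mu1 := by unfold mu1; positivity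

theorem mu2_pos : 0 < mu2 := by unfold mu2; linarith [sqrt_three_lt_two]

theorem mu1_add_mu2 : mu1 + mu2 = 1 := by unfold mu1 mu2; ring

variable {a b : ℝ}

theorem ga_pos (β : Fin 2) (ha : 0 < a) (hb : 0 < b) : 0 < ga β a b := by
  have := mu1_pos; have := mu2_pos
  unfold ga; split <;> positivity

theorem sum_ga : ∑ β, ga β a b = a + b := by
  simp only [Fin.sum_univ_two, ga]
  norm_num
  linear_combination (a + b) * mu1_add_mu2

theorem mul_ga (k : ℝ) (β : Fin 2) : k * ga β a b = ga β (k * a) (k * b) := by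
  unfold ga; split <;> ring

theorem ga_le_ga {a' b' : ℝ} (β : Fin 2) (ha : a ≤ a') (hb : b ≤ b') : ga β a b ≤ ga β a' b' := by
  have := mu1_pos; have := mu2_pos
  unfold ga; split <;> gcongr

theorem mul_ga_le {k p q : ℝ} (β : Fin 2) (ha : 0 ≤ a) (hb : 0 ≤ b) (hp : k ≤ p) (hq : k ≤ q) :
    k * ga β a b ≤ ga β (a * p) (b * q) := by
  rw [mul_ga]
  exact ga_le_ga β (by nlinarith) (by nlinarith)

theorem sum_mul_ga_le {k : Fin 2 → ℝ} {p q : ℝ} (ha : 0 ≤ a) (hb : 0 ≤ b)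
    (hk : ∀ β, k β ≤ p ∧ k β ≤ q) : ∑ β, k β * ga β a b ≤ a * p + b * q :=
  calc ∑ β, k β * ga β a b ≤ ∑ β, ga β (a * p) (b * q) :=
        sum_le_sum fun β _ => mul_ga_le β ha hb (hk β).1 (hk β).2
    _ = a * p + b * q := sum_ga

end GaussRule

theorem cpV_pred {c00 c01 : ℕ → ℕ → ℝ} {i j : ℕ} {β : Fin 2} (hi : 1 ≤ i) :
    cpV c00 c01 (i - 1) j β = ga β (c00 i j) (c01 i j) := by
  rw [cpV, Nat.sub_add_cancel hi]

theorem cpH_pred {c00 c10 : ℕ → ℕ → ℝ} {i j : ℕ} {β : Fin 2} (hj : 1 ≤ j) :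
    cpH c00 c10 i (j - 1) β = ga β (c00 i j) (c10 i j) := by
  rw [cpH, Nat.sub_add_cancel hj]

def AtCorners (P : ℕ → ℕ → Prop) (i j : ℕ) : Prop :=
  P (i - 1) (j - 1) ∧ P i (j - 1) ∧ P (i - 1) j ∧ P i j

theorem atCorners_of_forall {P : ℕ → ℕ → Prop} {Nx Ny i j : ℕ}
    (h : ∀ a b, a ≤ Nx → b ≤ Ny → P a b) (hi : i ≤ Nx) (hj : j ≤ Ny) : AtCorners P i j :=
  ⟨h _ _ (by omega) (by omega), h _ _ hi (by omega), h _ _ (by omega) hj, h _ _ hi hj⟩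

section Convection

variable {u1 u2 : ℕ → ℕ → Fin 2 → ℝ} {Φ c00 c10 c01 c11 : ℕ → ℕ → ℝ} {α Δx Δy Δt : ℝ}
  {i j : ℕ}

theorem Hc_pos (hi : 1 ≤ i) (hj : 1 ≤ j) (hΔx : 0 < Δx) (hΔy : 0 < Δy) (hΔt : 0 < Δt)
    (hα : 0 < α) (hK : 0 ≤ c00 i j ∧ 0 ≤ c10 i j ∧ 0 ≤ c01 i j ∧ 0 ≤ c11 i j)
    (hL : ∀ β, 0 < cmV c10 c11 (i - 1) j β) (hR : ∀ β, 0 < cpV c00 c01 i j β)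
    (hB : ∀ β, 0 < cmH c01 c11 i (j - 1) β) (hT : ∀ β, 0 < cpH c00 c10 i j β)
    (huL : ∀ β, u1 (i - 1) j β < α) (huR : ∀ β, u1 i j β < α)
    (huB : ∀ β, u2 i (j - 1) β < α) (huT : ∀ β, u2 i j β < α)
    (hcfl : AtCorners (fun a b => Δt / Δx + Δt / Δy ≤ Φ a b / (6 * α)) i j)
    (hcflL : ∀ β, Δt / Δx + Δt / Δy ≤ Φ (i - 1) (j - 1) / (6 * (α - u1 (i - 1) j β)) ∧
      Δt / Δx + Δt / Δy ≤ Φ (i - 1) j / (6 * (α - u1 (i - 1) j β)))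
    (hcflB : ∀ β, Δt / Δx + Δt / Δy ≤ Φ (i - 1) (j - 1) / (6 * (α - u2 i (j - 1) β)) ∧
      Δt / Δx + Δt / Δy ≤ Φ i (j - 1) / (6 * (α - u2 i (j - 1) β))) :
    0 < Hc u1 u2 Φ c00 c10 c01 c11 α Δx Δy Δt i j := by
  obtain ⟨h00, h10, h01, h11⟩ := hK
  obtain ⟨-, hcflB', hcflC', hcflD'⟩ := hcfl
  have hΔtx : 0 < Δt / Δx := by positivity
  have hΔty : 0 < Δt / Δy := by positivity
  have hs : 0 < Δt / Δx + Δt / Δy := by positivity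
  -- upwinding: after dropping the positive inflow from the neighbours only own traces remain
  have hx : ∀ β, -((α - u1 (i - 1) j β) * ga β (c00 i j) (c01 i j)
      + α * ga β (c10 i j) (c11 i j)) < uc1 u1 c00 c10 c01 c11 α (i - 1) j β
        - uc1 u1 c00 c10 c01 c11 α i j β := by
    intro β
    have h1 := mul_pos hα (hL β)
    have h2 := mul_pos (sub_pos.2 (huR β)) (hR β)
    simp only [uc1, cpV_pred hi, cmV] at h1 ⊢
    linarith
  have hy : ∀ β, -((α - u2 i (j - 1) β) * ga β (c00 i j) (c10 i j)
      + α * ga β (c01 i j) (c11 i j)) < uc2 u2 c00 c10 c01 c11 α i (j - 1) β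
        - uc2 u2 c00 c10 c01 c11 α i j β := by
    intro β
    have h1 := mul_pos hα (hB β)
    have h2 := mul_pos (sub_pos.2 (huT β)) (hT β)
    simp only [uc2, cpH_pred hj, cmH] at h1 ⊢
    linarith
  have cfl : ∀ {k Φk}, 0 < k → Δt / Δx + Δt / Δy ≤ Φk / (6 * k) →
      6 * k ≤ Φk / (Δt / Δx + Δt / Δy) := fun hk h => (le_div_comm₀ hs (by positivity)).1 h
  have hL' := sum_mul_ga_le (k := fun β => 6 * (α - u1 (i - 1) j β)) h00 h01 fun β =>
    ⟨cfl (sub_pos.2 (huL β)) (hcflL β).1, cfl (sub_pos.2 (huL β)) (hcflL β).2⟩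
  have hR' := sum_mul_ga_le (k := fun _ => 6 * α) h10 h11 fun _ =>
    ⟨cfl hα hcflB', cfl hα hcflD'⟩
  have hB' := sum_mul_ga_le (k := fun β => 6 * (α - u2 i (j - 1) β)) h00 h10 fun β =>
    ⟨cfl (sub_pos.2 (huB β)) (hcflB β).1, cfl (sub_pos.2 (huB β)) (hcflB β).2⟩
  have hT' := sum_mul_ga_le (k := fun _ => 6 * α) h01 h11 fun _ =>
    ⟨cfl hα hcflC', cfl hα hcflD'⟩
  set W := c00 i j * (Φ (i - 1) (j - 1) / (Δt / Δx + Δt / Δy))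
    + c10 i j * (Φ i (j - 1) / (Δt / Δx + Δt / Δy))
    + c01 i j * (Φ (i - 1) j / (Δt / Δx + Δt / Δy))
    + c11 i j * (Φ i j / (Δt / Δx + Δt / Δy)) with hW_def
  have hW : (Δt / Δx + Δt / Δy) * W = 4 * rbar Φ c00 c10 c01 c11 i j := by
    rw [hW_def, rbar]; field_simp
  have hxs : -W / 12 < ∑ β, 1 / 2 * (uc1 u1 c00 c10 c01 c11 α (i - 1) j β
      - uc1 u1 c00 c10 c01 c11 α i j β) := by
    simp only [Fin.sum_univ_two] at hL' hR' ⊢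
    linarith [hx 0, hx 1]
  have hys : -W / 12 < ∑ β, 1 / 2 * (uc2 u2 c00 c10 c01 c11 α i (j - 1) β
      - uc2 u2 c00 c10 c01 c11 α i j β) := by
    simp only [Fin.sum_univ_two] at hB' hT' ⊢
    linarith [hy 0, hy 1]
  unfold Hc
  linarith [mul_lt_mul_of_pos_left hxs hΔtx, mul_lt_mul_of_pos_left hys hΔty]

end Convection

theorem neg_mul_add_le_mul_sub {x X a b : ℝ} (hx : |x| ≤ X) (ha : 0 ≤ a) (hb : 0 ≤ b) :
    -(X * (a + b)) ≤ x * (b - a) := by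
  obtain ⟨h1, h2⟩ := abs_le.1 hx
  nlinarith

/-- Interior-penalty flux `{D_n c_n + D_t c_t} + (α̃/Δτ)[c]` at Gauss point `β` of an edge,
with `Δn`, `Δτ` the mesh widths normal and tangential to it. The cell behind the edge has
traces `a` (far side) and `b` (on the edge) and coefficients `dm` (normal), `tm` (tangential);
the cell ahead has traces `p` (on the edge) and `n` (far side) and coefficients `dp`, `tp`. -/
def ipFlux (Δn Δτ αt : ℝ) (dm tm dp tp a b p n : Fin 2 → ℝ) (β : Fin 2) : ℝ :=
  (dm β * ((b β - a β) / Δn) + tm β * ((Real.sqrt 3 / Δτ) * (b 1 - b 0))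
    + dp β * ((n β - p β) / Δn) + tp β * ((Real.sqrt 3 / Δτ) * (p 1 - p 0))) / 2
    + (αt / Δτ) * (p β - b β)

section IPFlux

variable {Δn Δτ αt D T : ℝ} {dm tm dp tp a b p n : Fin 2 → ℝ}

theorem ipFlux_reflect (β : Fin 2) :
    ipFlux Δn Δτ αt dp (-tp) dm (-tm) n p b a β = -ipFlux Δn Δτ αt dm tm dp tp a b p n β := by
  simp only [ipFlux, Pi.neg_apply]; ring

variable (hΔn : 0 < Δn) (hΔτ : 0 < Δτ) (hαt : Δτ / (2 * Δn) * D + Real.sqrt 3 * T ≤ αt)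
  (hdm : ∀ β, dm β ∈ Set.Icc 0 D) (hdp : ∀ β, dp β ∈ Set.Icc 0 D)
  (htm : ∀ β, |tm β| ≤ T) (htp : ∀ β, |tp β| ≤ T)
  (ha : ∀ β, 0 ≤ a β) (hb : ∀ β, 0 ≤ b β) (hp : ∀ β, 0 ≤ p β) (hn : ∀ β, 0 ≤ n β)
include hΔn hΔτ hαt hdm hdp htm htp ha hb hp hn

theorem neg_le_sum_ipFlux :
    -(D / (2 * Δn) * ∑ β, a β + (αt + Real.sqrt 3 * T) / Δτ * ∑ β, b β)
      ≤ ∑ β, ipFlux Δn Δτ αt dm tm dp tp a b p n β := by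
  have hpen : D / (2 * Δn) + Real.sqrt 3 * T / Δτ ≤ αt / Δτ :=
    calc D / (2 * Δn) + Real.sqrt 3 * T / Δτ = (Δτ / (2 * Δn) * D + Real.sqrt 3 * T) / Δτ := by
          field_simp
      _ ≤ αt / Δτ := by gcongr
  have hsum : ∀ t : Fin 2 → ℝ, (∀ β, |t β| ≤ T) → |t 0 + t 1| ≤ 2 * T := fun t h =>
    (abs_add_le _ _).trans (by linarith [h 0, h 1])
  -- the penalty makes the coefficients of the traces `p` of the cell ahead nonnegative
  have hcoef : ∀ β s, |s| ≤ 2 * T →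
      0 ≤ αt / Δτ - dp β / (2 * Δn) + Real.sqrt 3 / (2 * Δτ) * s := by
    intro β s hs
    have h1 : dp β / (2 * Δn) ≤ D / (2 * Δn) := by gcongr; exact (hdp β).2
    have h2 : Real.sqrt 3 / (2 * Δτ) * -s ≤ Real.sqrt 3 / (2 * Δτ) * (2 * T) :=
      mul_le_mul_of_nonneg_left ((neg_le_abs s).trans hs) (by positivity)
    linear_combination hpen + h1 + h2
  have hp0 := mul_nonneg (hcoef 0 _ ((abs_neg _).trans_le (hsum tp htp))) (hp 0)
  have hp1 := mul_nonneg (hcoef 1 _ (hsum tp htp)) (hp 1)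
  have hown := mul_le_mul_of_nonneg_left (neg_mul_add_le_mul_sub (hsum tm htm) (hb 0) (hb 1))
    (by positivity : 0 ≤ Real.sqrt 3 / Δτ)
  have hnormal : ∀ β, -(D * a β) / Δn ≤ (dm β * (b β - a β) + dp β * n β) / Δn := by
    intro β
    have h1 := mul_le_mul_of_nonneg_right (hdm β).2 (ha β)
    have h2 := mul_nonneg (hdm β).1 (hb β)
    have h3 := mul_nonneg (hdp β).1 (hn β)
    gcongr
    linarith
  simp only [ipFlux, Fin.sum_univ_two]
  linear_combination (hnormal 0 + hnormal 1 + hown) / 2 + hp0 + hp1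

theorem sum_ipFlux_le :
    ∑ β, ipFlux Δn Δτ αt dm tm dp tp a b p n β
      ≤ D / (2 * Δn) * ∑ β, n β + (αt + Real.sqrt 3 * T) / Δτ * ∑ β, p β := by
  have h := neg_le_sum_ipFlux (tm := -tp) (tp := -tm) hΔn hΔτ hαt hdp hdm
    (fun β => (abs_neg _).trans_le (htp β)) (fun β => (abs_neg _).trans_le (htm β)) hn hp hb ha
  simp only [ipFlux_reflect, sum_neg_distrib] at h
  linarith

end IPFlux

theorem diffusion_cfl_loss_lt {Δx Δy Δt αt D T Φ : ℝ} (hΔx : 0 < Δx) (hΔy : 0 < Δy)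
    (hΔt : 0 < Δt) (hD : 0 ≤ D) (hT : 0 ≤ T) (hαt : 0 ≤ αt)
    (h : D * (Δt / Δx ^ 2) + 2 * (αt + T) * (Δt / (Δx * Δy)) < Φ / 12) :
    Δt / Δx * (D / (2 * Δx) + (αt + Real.sqrt 3 * T) / Δy) / 2 < Φ / 24 := by
  have e : Δt / Δx * (D / (2 * Δx) + (αt + Real.sqrt 3 * T) / Δy) / 2
      = D * (Δt / Δx ^ 2) / 4 + (αt + Real.sqrt 3 * T) * (Δt / (Δx * Δy)) / 2 := by
    field_simp; ring
  have h1 : 0 ≤ D * (Δt / Δx ^ 2) := by positivity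
  have h2 : (αt + Real.sqrt 3 * T) * (Δt / (Δx * Δy)) ≤ 2 * (αt + T) * (Δt / (Δx * Δy)) := by
    gcongr
    nlinarith [sqrt_three_lt_two]
  linarith

section Diffusion

variable {Φ c00 c10 c01 c11 : ℕ → ℕ → ℝ} {D11m D11p D12m D12p : ℕ → ℕ → Fin 2 → ℝ}
  {αt Δx Δy Δt D T : ℝ} {i j : ℕ}

theorem GxV_add_jumpV (i : ℕ) (β : Fin 2) :
    GxV D11m D11p D12m D12p c00 c10 c01 c11 Δx Δy i j β + αt / Δy * jumpV c00 c10 c01 c11 i j β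
      = ipFlux Δx Δy αt (D11m i j) (D12m i j) (D11p i j) (D12p i j) (cpV c00 c01 (i - 1) j)
          (cmV c10 c11 i j) (cpV c00 c01 i j) (cmV c10 c11 (i + 1) j) β := rfl

theorem Hdx_pos (hi : 1 ≤ i) (hΔx : 0 < Δx) (hΔy : 0 < Δy) (hΔt : 0 < Δt)
    (hαt : Δy / (2 * Δx) * D + Real.sqrt 3 * T ≤ αt)
    (hK : 0 < c00 i j ∧ 0 < c10 i j ∧ 0 < c01 i j ∧ 0 < c11 i j)
    (hM : ∀ β, 0 ≤ cmV c10 c11 (i - 1) j β) (hQ : ∀ β, 0 ≤ cpV c00 c01 (i - 1 - 1) j β)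
    (hP : ∀ β, 0 ≤ cpV c00 c01 i j β) (hN : ∀ β, 0 ≤ cmV c10 c11 (i + 1) j β)
    (hD11L : ∀ β, (0 ≤ D11m (i - 1) j β ∧ D11m (i - 1) j β ≤ D) ∧
      (0 ≤ D11p (i - 1) j β ∧ D11p (i - 1) j β ≤ D))
    (hD11R : ∀ β, (0 ≤ D11m i j β ∧ D11m i j β ≤ D) ∧ (0 ≤ D11p i j β ∧ D11p i j β ≤ D))
    (hD12L : ∀ β, |D12m (i - 1) j β| ≤ T ∧ |D12p (i - 1) j β| ≤ T)
    (hD12R : ∀ β, |D12m i j β| ≤ T ∧ |D12p i j β| ≤ T)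
    (hcfl : AtCorners
      (fun a b => D * (Δt / Δx ^ 2) + 2 * (αt + T) * (Δt / (Δx * Δy)) < Φ a b / 12) i j) :
    0 < Hdx D11m D11p D12m D12p Φ c00 c10 c01 c11 αt Δx Δy Δt i j := by
  obtain ⟨h00, h10, h01, h11⟩ := hK
  have hA : ∀ β, 0 ≤ cpV c00 c01 (i - 1) j β := fun β => by
    rw [cpV_pred hi]; exact (ga_pos β h00 h01).le
  have hB : ∀ β, 0 ≤ cmV c10 c11 i j β := fun β => (ga_pos β h10 h11).le
  have hr := neg_le_sum_ipFlux hΔx hΔy hαt (fun β => (hD11R β).1) (fun β => (hD11R β).2)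
    (fun β => (hD12R β).1) (fun β => (hD12R β).2) hA hB hP hN
  have hl := sum_ipFlux_le hΔx hΔy hαt (fun β => (hD11L β).1) (fun β => (hD11L β).2)
    (fun β => (hD12L β).1) (fun β => (hD12L β).2) hQ hM hA hB
  have hsA : ∑ β, cpV c00 c01 (i - 1) j β = c00 i j + c01 i j := by
    simp only [cpV_pred hi, sum_ga]
  have hsB : ∑ β, cmV c10 c11 i j β = c10 i j + c11 i j := sum_ga
  rw [hsA, hsB] at hl hr
  have hD : 0 ≤ D := (hD11R 0).1.1.trans (hD11R 0).1.2
  have hT : 0 ≤ T := (abs_nonneg _).trans (hD12R 0).1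
  have hαt0 : 0 ≤ αt := le_trans (by positivity) hαt
  have hcorner : ∀ {Φk c}, 0 < c →
      D * (Δt / Δx ^ 2) + 2 * (αt + T) * (Δt / (Δx * Δy)) < Φk / 12 →
      c * (Δt / Δx * (D / (2 * Δx) + (αt + Real.sqrt 3 * T) / Δy) / 2) < c * (Φk / 24) :=
    fun hc h => mul_lt_mul_of_pos_left (diffusion_cfl_loss_lt hΔx hΔy hΔt hD hT hαt0 h) hc
  obtain ⟨hcA, hcB, hcC, hcD⟩ := hcfl
  have hΔtx : 0 ≤ Δt / Δx := by positivity
  have hl' := mul_le_mul_of_nonneg_left hl hΔtx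
  have hr' := mul_le_mul_of_nonneg_left hr hΔtx
  simp only [Hdx, GxV_add_jumpV, Nat.sub_add_cancel hi, rbar, Fin.sum_univ_two] at hl' hr' ⊢
  linarith [hcorner h00 hcA, hcorner h10 hcB, hcorner h01 hcC, hcorner h11 hcD]

end Diffusion

theorem Hdy_eq_Hdx_swap (D21m D21p D22m D22p : ℕ → ℕ → Fin 2 → ℝ)
    (Φ c00 c10 c01 c11 : ℕ → ℕ → ℝ) (αt Δx Δy Δt : ℝ) (i j : ℕ) :
    Hdy D21m D21p D22m D22p Φ c00 c10 c01 c11 αt Δx Δy Δt i j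
      = Hdx (Function.swap D22m) (Function.swap D22p) (Function.swap D21m) (Function.swap D21p)
          (Function.swap Φ) (Function.swap c00) (Function.swap c01) (Function.swap c10)
          (Function.swap c11) αt Δy Δx Δt j i := by
  simp only [Hdy, Hdx, GyH, GxV, rbar, jumpH, jumpV, cxmH, cxpH, cymH, cypH, cxmV, cxpV, cymV,
    cypV, cmH, cpH, cmV, cpV, Function.swap, Fin.sum_univ_two]
  ring

theorem source_point_pos {Δt z1 r c Φm q ct P : ℝ} (hΔt : 0 < Δt) (hz1 : 0 ≤ z1) (hc : 0 < c)
    (hΦm : 0 < Φm) (hrc : Φm * c ≤ r) (hP : 6 * Δt * z1 * max P 0 ≤ 1)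
    (hq1 : 0 ≤ q → 0 ≤ ct) (hq2 : q < 0 → ct = c ∧ 6 * Δt * (-q) < Φm) :
    0 < r / 3 + Δt * (ct * q - z1 * r * P) := by
  have hr : 0 < r := (mul_pos hΦm hc).trans_le hrc
  have hsink : Δt * (z1 * r * P) ≤ r / 6 := by
    have h := mul_le_mul_of_nonneg_left (le_max_left P 0) (by positivity : 0 ≤ 6 * Δt * z1)
    nlinarith
  rcases lt_or_ge q 0 with hq | hq
  · obtain ⟨rfl, hq'⟩ := hq2 hq
    -- a sink draws at most `Φm·c/6 ≤ r/6`
    have := mul_lt_mul_of_pos_right (by linarith : Δt * (-q) < Φm / 6) hc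
    linarith
  · nlinarith [mul_nonneg hΔt.le (mul_nonneg (hq1 hq) hq)]

section Source

variable {Φ c00 c10 c01 c11 : ℕ → ℕ → ℝ} {i j : ℕ}

theorem mul_cGP_le_rGP {m : ℝ} (β γ : Fin 2)
    (hK : 0 ≤ c00 i j ∧ 0 ≤ c10 i j ∧ 0 ≤ c01 i j ∧ 0 ≤ c11 i j)
    (hm : AtCorners (fun a b => m ≤ Φ a b) i j) :
    m * cGP c00 c10 c01 c11 i j β γ ≤ rGP Φ c00 c10 c01 c11 i j β γ := by
  obtain ⟨h00, h10, h01, h11⟩ := hK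
  obtain ⟨hA, hB, hC, hD⟩ := hm
  rw [cGP, rGP, mul_ga]
  exact ga_le_ga β (mul_ga_le γ h00 h01 hA hC) (mul_ga_le γ h10 h11 hB hD)

theorem sum_rGP : ∑ β, ∑ γ, rGP Φ c00 c10 c01 c11 i j β γ = 4 * rbar Φ c00 c10 c01 c11 i j := by
  rw [sum_comm]
  simp only [rGP, rbar, sum_ga, sum_add_distrib]
  ring

theorem Hs_pos {q ct P : ℕ → ℕ → Fin 2 → Fin 2 → ℝ} {z1 Δt : ℝ} (hΔt : 0 < Δt) (hz1 : 0 ≤ z1)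
    (hK : 0 < c00 i j ∧ 0 < c10 i j ∧ 0 < c01 i j ∧ 0 < c11 i j)
    (hΦ : AtCorners (fun a b => 0 < Φ a b) i j)
    (hP : ∀ β γ, 6 * Δt * z1 * max (P i j β γ) 0 ≤ 1)
    (hq1 : ∀ β γ, 0 ≤ q i j β γ → 0 ≤ ct i j β γ)
    (hq2 : ∀ β γ, q i j β γ < 0 →
      ct i j β γ = cGP c00 c10 c01 c11 i j β γ ∧
      6 * Δt * (-q i j β γ)
        < min (min (Φ (i - 1) (j - 1)) (Φ i (j - 1))) (min (Φ (i - 1) j) (Φ i j))) :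
    0 < Hs Φ c00 c10 c01 c11 q ct P z1 Δt i j := by
  obtain ⟨h00, h10, h01, h11⟩ := hK
  obtain ⟨hA, hB, hC, hD⟩ := hΦ
  have hΦm := lt_min (lt_min hA hB) (lt_min hC hD)
  have hm : AtCorners (fun a b => min (min (Φ (i - 1) (j - 1)) (Φ i (j - 1)))
      (min (Φ (i - 1) j) (Φ i j)) ≤ Φ a b) i j :=
    ⟨(min_le_left _ _).trans (min_le_left _ _), (min_le_left _ _).trans (min_le_right _ _),
      (min_le_right _ _).trans (min_le_left _ _), (min_le_right _ _).trans (min_le_right _ _)⟩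
  have hpt : ∀ β γ, 0 < rGP Φ c00 c10 c01 c11 i j β γ / 3 + Δt * (ct i j β γ * q i j β γ
      - z1 * rGP Φ c00 c10 c01 c11 i j β γ * P i j β γ) := fun β γ =>
    source_point_pos hΔt hz1 (ga_pos β (ga_pos γ h00 h01) (ga_pos γ h10 h11)) hΦm
      (mul_cGP_le_rGP β γ ⟨h00.le, h10.le, h01.le, h11.le⟩ hm) (hP β γ) (hq1 β γ) (hq2 β γ)
  have hsum : ∑ β, ∑ γ, rGP Φ c00 c10 c01 c11 i j β γ = 4 * rbar Φ c00 c10 c01 c11 i j := sum_rGP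
  simp only [Hs, Fin.sum_univ_two] at hsum ⊢
  linarith [hpt 0 0, hpt 0 1, hpt 1 0, hpt 1 1]

end Source

theorem positivity_of_cell_averages_2d_general
    (Nx Ny : ℕ) (Δx Δy Δt : ℝ)
    (hΔx : 0 < Δx) (hΔy : 0 < Δy) (hΔt : 0 < Δt)
    (Φ c00 c10 c01 c11 : ℕ → ℕ → ℝ)
    (u1 u2 D11m D11p D12m D12p D21m D21p D22m D22p : ℕ → ℕ → Fin 2 → ℝ)
    (q ct P : ℕ → ℕ → Fin 2 → Fin 2 → ℝ) (α αt z1 D11M D12M D22M D21M : ℝ)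
    (hΦ : ∀ i j, i ≤ Nx → j ≤ Ny → 0 < Φ i j)
    -- (i) all corner concentration values of all cells strictly positive
    (hc : ∀ i j, 1 ≤ i → i ≤ Nx → 1 ≤ j → j ≤ Ny →
      0 < c00 i j ∧ 0 < c10 i j ∧ 0 < c01 i j ∧ 0 < c11 i j)
    -- (ii) convection conditions
    (hα0 : 0 < α)
    (hα1 : ∀ i j, 1 ≤ i → i ≤ Nx - 1 → 1 ≤ j → j ≤ Ny → ∀ β : Fin 2, u1 i j β < α)
    (hα2 : ∀ i j, 1 ≤ i → i ≤ Nx → 1 ≤ j → j ≤ Ny - 1 → ∀ β : Fin 2, u2 i j β < α)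
    (hCFL0 : ∀ i j, i ≤ Nx → j ≤ Ny → Δt / Δx + Δt / Δy ≤ Φ i j / (6 * α))
    (hCFL1 : ∀ i j, 1 ≤ i → i ≤ Nx - 1 → 1 ≤ j → j ≤ Ny → ∀ β : Fin 2,
      Δt / Δx + Δt / Δy ≤ Φ i (j - 1) / (6 * (α - u1 i j β)) ∧
      Δt / Δx + Δt / Δy ≤ Φ i j / (6 * (α - u1 i j β)))
    (hCFL2 : ∀ i j, 1 ≤ i → i ≤ Nx → 1 ≤ j → j ≤ Ny - 1 → ∀ β : Fin 2,
      Δt / Δx + Δt / Δy ≤ Φ (i - 1) j / (6 * (α - u2 i j β)) ∧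
      Δt / Δx + Δt / Δy ≤ Φ i j / (6 * (α - u2 i j β)))
    -- (iii) diffusion conditions
    (hD11 : ∀ i j, 1 ≤ i → i ≤ Nx - 1 → 1 ≤ j → j ≤ Ny → ∀ β : Fin 2,
      (0 ≤ D11m i j β ∧ D11m i j β ≤ D11M) ∧ (0 ≤ D11p i j β ∧ D11p i j β ≤ D11M))
    (hD12 : ∀ i j, 1 ≤ i → i ≤ Nx - 1 → 1 ≤ j → j ≤ Ny → ∀ β : Fin 2,
      |D12m i j β| ≤ D12M ∧ |D12p i j β| ≤ D12M)
    (hD22 : ∀ i j, 1 ≤ i → i ≤ Nx → 1 ≤ j → j ≤ Ny - 1 → ∀ β : Fin 2,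
      (0 ≤ D22m i j β ∧ D22m i j β ≤ D22M) ∧ (0 ≤ D22p i j β ∧ D22p i j β ≤ D22M))
    (hD21 : ∀ i j, 1 ≤ i → i ≤ Nx → 1 ≤ j → j ≤ Ny - 1 → ∀ β : Fin 2,
      |D21m i j β| ≤ D21M ∧ |D21p i j β| ≤ D21M)
    (hαt1 : (Δy / (2 * Δx)) * D11M + Real.sqrt 3 * D12M ≤ αt)
    (hαt2 : (Δx / (2 * Δy)) * D22M + Real.sqrt 3 * D21M ≤ αt)
    (hCFL3 : ∀ i j, i ≤ Nx → j ≤ Ny →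
      D11M * (Δt / Δx ^ 2) + 2 * (αt + D12M) * (Δt / (Δx * Δy)) < Φ i j / 12)
    (hCFL4 : ∀ i j, i ≤ Nx → j ≤ Ny →
      D22M * (Δt / Δy ^ 2) + 2 * (αt + D21M) * (Δt / (Δx * Δy)) < Φ i j / 12)
    -- (iv) source conditions
    (hz1 : 0 ≤ z1)
    (hP : ∀ i j, 1 ≤ i → i ≤ Nx → 1 ≤ j → j ≤ Ny → ∀ β γ : Fin 2,
      6 * Δt * z1 * max (P i j β γ) 0 ≤ 1)
    (hq1 : ∀ i j, 1 ≤ i → i ≤ Nx → 1 ≤ j → j ≤ Ny → ∀ β γ : Fin 2,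
      0 ≤ q i j β γ → 0 ≤ ct i j β γ)
    (hq2 : ∀ i j, 1 ≤ i → i ≤ Nx → 1 ≤ j → j ≤ Ny → ∀ β γ : Fin 2,
      q i j β γ < 0 →
        ct i j β γ = cGP c00 c10 c01 c11 i j β γ ∧
        6 * Δt * (-q i j β γ)
          < min (min (Φ (i - 1) (j - 1)) (Φ i (j - 1))) (min (Φ (i - 1) j) (Φ i j))) :
    ∀ i j, 2 ≤ i → i ≤ Nx - 1 → 2 ≤ j → j ≤ Ny - 1 →
      0 < rbarnew u1 u2 D11m D11p D12m D12p D21m D21p D22m D22p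
            Φ c00 c10 c01 c11 q ct P α αt z1 Δx Δy Δt i j := by
  intro i j hi hiN hj hjN
  have hK := hc i j (by omega) (by omega) (by omega) (by omega)
  have hL := hc (i - 1) j (by omega) (by omega) (by omega) (by omega)
  have hR := hc (i + 1) j (by omega) (by omega) (by omega) (by omega)
  have hB := hc i (j - 1) (by omega) (by omega) (by omega) (by omega)
  have hT := hc i (j + 1) (by omega) (by omega) (by omega) (by omega)
  have corners : ∀ {Q : ℕ → ℕ → Prop}, (∀ a b, a ≤ Nx → b ≤ Ny → Q a b) → AtCorners Q i j :=
    fun h => atCorners_of_forall h (by omega) (by omega)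
  refine add_pos (add_pos (add_pos ?_ ?_) ?_) ?_
  · refine Hc_pos ?_ ?_ hΔx hΔy hΔt hα0 ⟨hK.1.le, hK.2.1.le, hK.2.2.1.le, hK.2.2.2.le⟩
      (fun β => ga_pos β hL.2.1 hL.2.2.2) (fun β => ga_pos β hR.1 hR.2.2.1)
      (fun β => ga_pos β hB.2.2.1 hB.2.2.2) (fun β => ga_pos β hT.1 hT.2.1)
      (hα1 _ _ ?_ ?_ ?_ ?_) (hα1 _ _ ?_ ?_ ?_ ?_) (hα2 _ _ ?_ ?_ ?_ ?_) (hα2 _ _ ?_ ?_ ?_ ?_)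
      (corners hCFL0) (hCFL1 _ _ ?_ ?_ ?_ ?_) (hCFL2 _ _ ?_ ?_ ?_ ?_) <;> omega
  · refine Hdx_pos ?_ hΔx hΔy hΔt hαt1 hK (fun β => (ga_pos β hL.2.1 hL.2.2.2).le)
      (fun β => by rw [cpV_pred (by omega)]; exact (ga_pos β hL.1 hL.2.2.1).le)
      (fun β => (ga_pos β hR.1 hR.2.2.1).le) (fun β => (ga_pos β hR.2.1 hR.2.2.2).le)
      (hD11 _ _ ?_ ?_ ?_ ?_) (hD11 _ _ ?_ ?_ ?_ ?_) (hD12 _ _ ?_ ?_ ?_ ?_)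
      (hD12 _ _ ?_ ?_ ?_ ?_) (corners hCFL3) <;> omega
  · rw [Hdy_eq_Hdx_swap]
    refine Hdx_pos ?_ hΔy hΔx hΔt hαt2 ⟨hK.1, hK.2.2.1, hK.2.1, hK.2.2.2⟩
      (fun β => (ga_pos β hB.2.2.1 hB.2.2.2).le)
      (fun β => by rw [cpV_pred (by omega)]; exact (ga_pos β hB.1 hB.2.1).le)
      (fun β => (ga_pos β hT.1 hT.2.1).le) (fun β => (ga_pos β hT.2.2.1 hT.2.2.2).le)
      (hD22 _ _ ?_ ?_ ?_ ?_) (hD22 _ _ ?_ ?_ ?_ ?_) (hD21 _ _ ?_ ?_ ?_ ?_)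
      (hD21 _ _ ?_ ?_ ?_ ?_)
      (atCorners_of_forall (fun a b ha hb => by rw [mul_comm Δy Δx]; exact hCFL4 b a hb ha) ?_ ?_)
      <;> omega
  · refine Hs_pos hΔt hz1 hK (corners hΦ) (hP _ _ ?_ ?_ ?_ ?_) (hq1 _ _ ?_ ?_ ?_ ?_)
      (hq2 _ _ ?_ ?_ ?_ ?_) <;> omega

/-- Theorem 3.3 (2D): positivity of the Euler-forward cell-average update
`r̄^{new}_{ij} = H^c + H^d_x + H^d_y + H^s` for every interior cell. -/
theorem positivity_of_cell_averages_2d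
    (Nx Ny : ℕ) (hNx : 4 ≤ Nx) (hNy : 4 ≤ Ny) (Δx Δy Δt : ℝ)
    (hΔx : 0 < Δx) (hΔy : 0 < Δy) (hΔt : 0 < Δt)
    (Φ c00 c10 c01 c11 : ℕ → ℕ → ℝ)
    (u1 u2 D11m D11p D12m D12p D21m D21p D22m D22p : ℕ → ℕ → Fin 2 → ℝ)
    (q ct P : ℕ → ℕ → Fin 2 → Fin 2 → ℝ) (α αt z1 D11M D12M D22M D21M : ℝ)
    (hΦ : ∀ i j, i ≤ Nx → j ≤ Ny → 0 < Φ i j)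
    -- (i) all corner concentration values of all cells strictly positive
    (hc : ∀ i j, 1 ≤ i → i ≤ Nx → 1 ≤ j → j ≤ Ny →
      0 < c00 i j ∧ 0 < c10 i j ∧ 0 < c01 i j ∧ 0 < c11 i j)
    -- (ii) convection conditions
    (hα0 : 0 < α)
    (hα1 : ∀ i j, 1 ≤ i → i ≤ Nx - 1 → 1 ≤ j → j ≤ Ny → ∀ β : Fin 2, u1 i j β < α)
    (hα2 : ∀ i j, 1 ≤ i → i ≤ Nx → 1 ≤ j → j ≤ Ny - 1 → ∀ β : Fin 2, u2 i j β < α)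
    (hCFL0 : ∀ i j, i ≤ Nx → j ≤ Ny → Δt / Δx + Δt / Δy ≤ Φ i j / (6 * α))
    (hCFL1 : ∀ i j, 1 ≤ i → i ≤ Nx - 1 → 1 ≤ j → j ≤ Ny → ∀ β : Fin 2,
      Δt / Δx + Δt / Δy ≤ Φ i (j - 1) / (6 * (α - u1 i j β)) ∧
      Δt / Δx + Δt / Δy ≤ Φ i j / (6 * (α - u1 i j β)))
    (hCFL2 : ∀ i j, 1 ≤ i → i ≤ Nx → 1 ≤ j → j ≤ Ny - 1 → ∀ β : Fin 2,
      Δt / Δx + Δt / Δy ≤ Φ (i - 1) j / (6 * (α - u2 i j β)) ∧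
      Δt / Δx + Δt / Δy ≤ Φ i j / (6 * (α - u2 i j β)))
    -- (iii) diffusion conditions
    (hD11 : ∀ i j, 1 ≤ i → i ≤ Nx - 1 → 1 ≤ j → j ≤ Ny → ∀ β : Fin 2,
      (0 ≤ D11m i j β ∧ D11m i j β ≤ D11M) ∧ (0 ≤ D11p i j β ∧ D11p i j β ≤ D11M))
    (hD12 : ∀ i j, 1 ≤ i → i ≤ Nx - 1 → 1 ≤ j → j ≤ Ny → ∀ β : Fin 2,
      |D12m i j β| ≤ D12M ∧ |D12p i j β| ≤ D12M)
    (hD22 : ∀ i j, 1 ≤ i → i ≤ Nx → 1 ≤ j → j ≤ Ny - 1 → ∀ β : Fin 2,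
      (0 ≤ D22m i j β ∧ D22m i j β ≤ D22M) ∧ (0 ≤ D22p i j β ∧ D22p i j β ≤ D22M))
    (hD21 : ∀ i j, 1 ≤ i → i ≤ Nx → 1 ≤ j → j ≤ Ny - 1 → ∀ β : Fin 2,
      |D21m i j β| ≤ D21M ∧ |D21p i j β| ≤ D21M)
    (hαt0 : 0 < αt)
    (hαt1 : (Δy / (2 * Δx)) * D11M + Real.sqrt 3 * D12M ≤ αt)
    (hαt2 : (Δx / (2 * Δy)) * D22M + Real.sqrt 3 * D21M ≤ αt)
    (hCFL3 : ∀ i j, i ≤ Nx → j ≤ Ny →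
      D11M * (Δt / Δx ^ 2) + 2 * (αt + D12M) * (Δt / (Δx * Δy)) < Φ i j / 12)
    (hCFL4 : ∀ i j, i ≤ Nx → j ≤ Ny →
      D22M * (Δt / Δy ^ 2) + 2 * (αt + D21M) * (Δt / (Δx * Δy)) < Φ i j / 12)
    -- (iv) source conditions
    (hz1 : 0 ≤ z1)
    (hP : ∀ i j, 1 ≤ i → i ≤ Nx → 1 ≤ j → j ≤ Ny → ∀ β γ : Fin 2,
      6 * Δt * z1 * max (P i j β γ) 0 ≤ 1)
    (hq1 : ∀ i j, 1 ≤ i → i ≤ Nx → 1 ≤ j → j ≤ Ny → ∀ β γ : Fin 2,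
      0 ≤ q i j β γ → 0 ≤ ct i j β γ)
    (hq2 : ∀ i j, 1 ≤ i → i ≤ Nx → 1 ≤ j → j ≤ Ny → ∀ β γ : Fin 2,
      q i j β γ < 0 →
        ct i j β γ = cGP c00 c10 c01 c11 i j β γ ∧
        6 * Δt * (-q i j β γ)
          < min (min (Φ (i - 1) (j - 1)) (Φ i (j - 1))) (min (Φ (i - 1) j) (Φ i j))) :
    ∀ i j, 2 ≤ i → i ≤ Nx - 1 → 2 ≤ j → j ≤ Ny - 1 →
      0 < rbarnew u1 u2 D11m D11p D12m D12p D21m D21p D22m D22p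
            Φ c00 c10 c01 c11 q ct P α αt z1 Δx Δy Δt i j :=
  positivity_of_cell_averages_2d_general Nx Ny Δx Δy Δt hΔx hΔy hΔt Φ c00 c10 c01 c11 u1 u2 D11m
    D11p D12m D12p D21m D21p D22m D22p q ct P α αt z1 D11M D12M D22M D21M hΦ hc hα0 hα1 hα2 hCFL0
    hCFL1 hCFL2 hD11 hD12 hD22 hD21 hαt1 hαt2 hCFL3 hCFL4 hz1 hP hq1 hq2

end DG2D
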